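/- arXiv:1008.1234 — 3 statements merged into one kernel-verified Lean document; each statement's English description precedes it below -/
import Mathlib

section
/- Let n ≥ 1 and let J¹, J² : ℝ^{2n} → ℝ^{2n} be ℝ-linear maps with (J¹)² = (J²)² = −id (linear complex structures). Let M ⊂ ℝ^{2n} be a hyperplane through the origin, say M = ker ℓ for a nonzero linear functional ℓ on ℝ^{2n}. Suppose that either M ∩ J¹(M) ≠ M ∩ J²(M), or the operator norm ‖J² − J¹‖ (with respect to the Euclidean norm) is strictly less than 2. Then there exists v ∈ M such that J¹v and J²v lie in the same connected component of ℝ^{2n} ∖ M, i.e., ℓ(J¹v)·ℓ(J²v) > 0. -/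
open Set MeasureTheory Filter
open scoped Topology

noncomputable section

section Defs

variable {E F E₁ E₂ : Type*}
  [NormedAddCommGroup E] [NormedSpace ℝ E] [NormedAddCommGroup F] [NormedSpace ℝ F]
  [NormedAddCommGroup E₁] [NormedSpace ℝ E₁] [NormedAddCommGroup E₂] [NormedSpace ℝ E₂]

/-- The Hölder class `C^{m+α}(S)`, with all derivatives up to order `m` bounded by `C`
and the `m`-th order derivative `α`-Hölder with constant `C` on `S`. -/
def CmHolderOnWith (m : ℕ) (α C : ℝ) (f : E → F) (S : Set E) : Prop :=
  ContDiffOn ℝ m f S ∧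
  (∀ i ≤ m, ∀ x ∈ S, ‖iteratedFDerivWithin ℝ i f S x‖ ≤ C) ∧
  ∀ x ∈ S, ∀ y ∈ S,
    ‖iteratedFDerivWithin ℝ m f S x - iteratedFDerivWithin ℝ m f S y‖ ≤ C * ‖x - y‖ ^ α

/-- `f` belongs to the Hölder class `C^{m+α}(S)`. -/
def CmHolderOn (m : ℕ) (α : ℝ) (f : E → F) (S : Set E) : Prop :=
  ∃ C, CmHolderOnWith m α C f S

/-- The local Hölder class `C^{m+α}_loc(S)` : `f` is `C^m` on `S` and its `m`-th order
derivatives are `α`-Hölder on every compact subset of `S`. -/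
def CmHolderLocOn (m : ℕ) (α : ℝ) (f : E → F) (S : Set E) : Prop :=
  ContDiffOn ℝ m f S ∧
  ∀ K ⊆ S, IsCompact K → ∃ C, ∀ x ∈ K, ∀ y ∈ K,
    ‖iteratedFDerivWithin ℝ m f S x - iteratedFDerivWithin ℝ m f S y‖ ≤ C * ‖x - y‖ ^ α

/-- `γ` is a relatively open subset of the boundary of `Ω`. -/
def RelOpenInBoundary {X : Type*} [TopologicalSpace X] (γ Ω : Set X) : Prop :=
  ∃ U : Set X, IsOpen U ∧ γ = frontier Ω ∩ U

/-- `v` is a tangent vector of `M` at `p` : the velocity of a curve inside `M` through `p`. -/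
def TangentVectorAt (M : Set E) (p v : E) : Prop :=
  ∃ c : ℝ → E, c 0 = p ∧ (∀ᶠ s in 𝓝 (0:ℝ), c s ∈ M) ∧ HasDerivAt c v 0

/-- A parameter set: the closure of a bounded open subset of a euclidean space. -/
def IsParamSet (P : Set E) : Prop :=
  ∃ U : Set E, IsOpen U ∧ Bornology.IsBounded U ∧ P = closure U

/-- Any two points of `S` can be joined by a smooth curve in `S` of length at most a
constant times their distance. -/
def ChordArc (S : Set E) : Prop :=
  ∃ C > 0, ∀ a ∈ S, ∀ b ∈ S, ∃ c : ℝ → E, ContDiff ℝ (⊤ : ℕ∞) c ∧ c 0 = a ∧ c 1 = b ∧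
    (∀ s ∈ Icc (0:ℝ) 1, c s ∈ S) ∧ (∫ s in Icc (0:ℝ) 1, ‖deriv c s‖) ≤ C * ‖b - a‖

/-- The space `Ĉ^{k+α,j}(S, P)` with all norms bounded by `C`:
for all `i ≤ j`, the `i`-th `t`-derivatives of `f(z,t)` exist, are continuous on `S × P`,
and belong to `C^{k+α}(S)` in `z` with norm at most `C`, uniformly in `t ∈ P`. -/
def MixedHolderWith (k : ℕ) (α : ℝ) (j : ℕ) (C : ℝ) (f : E₁ → E₂ → F)
    (S : Set E₁) (P : Set E₂) : Prop :=
  (∀ z ∈ S, ContDiffOn ℝ j (f z) P) ∧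
  (∀ i ≤ j, ContinuousOn
    (fun q : E₁ × E₂ => iteratedFDerivWithin ℝ i (f q.1) P q.2) (S ×ˢ P)) ∧
  (∀ i ≤ j, ∀ t ∈ P,
    CmHolderOnWith k α C (fun z => iteratedFDerivWithin ℝ i (f z) P t) S)

/-- Membership in the space `Ĉ^{k+α,j}(S, P)`. -/
def MixedHolder (k : ℕ) (α : ℝ) (j : ℕ) (f : E₁ → E₂ → F) (S : Set E₁) (P : Set E₂) : Prop :=
  ∃ C, MixedHolderWith k α j C f S P

/-- The space `C^{k+α,j}(S,P) = ⋂_{l ≤ j} Ĉ^{k-l+α,l}(S,P)`, with norm bound `C`. -/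
def MixedCWith (k : ℕ) (α : ℝ) (j : ℕ) (C : ℝ) (f : E₁ → E₂ → F) (S : Set E₁)
    (P : Set E₂) : Prop :=
  ∀ l ≤ j, MixedHolderWith (k - l) α l C f S P

/-- Membership in the space `C^{k+α,j}(S,P) = ⋂_{l ≤ j} Ĉ^{k-l+α,l}(S,P)`. -/
def MixedC (k : ℕ) (α : ℝ) (j : ℕ) (f : E₁ → E₂ → F) (S : Set E₁) (P : Set E₂) : Prop :=
  ∀ l ≤ j, MixedHolder (k - l) α l f S P

/-- The local space `Ĉ^{k+α,j}` : regularity on `S × P` with bounds on compact subsets of `S`. -/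
def MixedHolderLoc (k : ℕ) (α : ℝ) (j : ℕ) (f : E₁ → E₂ → F) (S : Set E₁) (P : Set E₂) : Prop :=
  (∀ z ∈ S, ContDiffOn ℝ j (f z) P) ∧
  (∀ i ≤ j, ContinuousOn
    (fun q : E₁ × E₂ => iteratedFDerivWithin ℝ i (f q.1) P q.2) (S ×ˢ P)) ∧
  (∀ i ≤ j, ∀ t ∈ P, ContDiffOn ℝ k (fun z => iteratedFDerivWithin ℝ i (f z) P t) S) ∧
  ∀ K ⊆ S, IsCompact K → ∃ C, ∀ i ≤ j, ∀ t ∈ P,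
    (∀ l ≤ k, ∀ x ∈ K,
      ‖iteratedFDerivWithin ℝ l (fun z => iteratedFDerivWithin ℝ i (f z) P t) S x‖ ≤ C) ∧
    ∀ x ∈ K, ∀ y ∈ K,
      ‖iteratedFDerivWithin ℝ k (fun z => iteratedFDerivWithin ℝ i (f z) P t) S x -
        iteratedFDerivWithin ℝ k (fun z => iteratedFDerivWithin ℝ i (f z) P t) S y‖
        ≤ C * ‖x - y‖ ^ α

/-- The local space `C^{k+α,j}_loc = ⋂_{l ≤ j} Ĉ^{k-l+α,l}_loc`. -/
def MixedCLoc (k : ℕ) (α : ℝ) (j : ℕ) (f : E₁ → E₂ → F) (S : Set E₁) (P : Set E₂) : Prop :=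
  ∀ l ≤ j, MixedHolderLoc (k - l) α l f S P

/-- Iterated directional (partial) derivative along a list of directions. -/
def partialDerivMulti : List E → (E → F) → (E → F)
  | [], g => g
  | v :: vs, g => partialDerivMulti vs fun x => lineDeriv ℝ g x v

end Defs

/-- The Wirtinger derivative `∂f/∂z = (∂_x f - i ∂_y f)/2`. -/
def wirtingerZ (f : ℂ → ℂ) (z : ℂ) : ℂ :=
  (fderiv ℝ f z 1 - Complex.I * fderiv ℝ f z Complex.I) / 2

/-- The Wirtinger derivative `∂f/∂z̄ = (∂_x f + i ∂_y f)/2`. -/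
def wirtingerZbar (f : ℂ → ℂ) (z : ℂ) : ℂ :=
  (fderiv ℝ f z 1 + Complex.I * fderiv ℝ f z Complex.I) / 2

/-- The Cauchy-Green operator `(T_Ω f)(z) = (1/π) ∫_Ω f(ζ)/(z-ζ) dA(ζ)`. -/
def cauchyGreen (Ω : Set ℂ) (f : ℂ → ℂ) (z : ℂ) : ℂ :=
  (Real.pi : ℂ)⁻¹ * ∫ ζ in Ω, f ζ / (z - ζ)

/-- An embedded curve of class `C^{m+α}` in `ℂ`. -/
def IsEmbeddedCurve (m : ℕ) (α : ℝ) (γ : Set ℂ) : Prop :=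
  ∃ ρ : ℝ → ℂ, Set.InjOn ρ (Ioo (-1) 1) ∧ γ = ρ '' Ioo (-1) 1 ∧
    CmHolderLocOn m α ρ (Ioo (-1) 1) ∧ ∀ s ∈ Ioo (-1:ℝ) 1, deriv ρ s ≠ 0

/-- An embedded curve of class `C¹` in `ℂ`. -/
def IsC1EmbeddedCurve (γ : Set ℂ) : Prop :=
  ∃ ρ : ℝ → ℂ, Set.InjOn ρ (Ioo (-1) 1) ∧ γ = ρ '' Ioo (-1) 1 ∧
    ContDiffOn ℝ 1 ρ (Ioo (-1) 1) ∧ ∀ s ∈ Ioo (-1:ℝ) 1, deriv ρ s ≠ 0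

/-- A planar domain with boundary of class `C^{m+α}` : near each boundary point, after a
rotation and translation, the boundary is the graph of a `C^{m+α}` function. -/
def PlanarBoundaryClass (m : ℕ) (α : ℝ) (Ω : Set ℂ) : Prop :=
  ∀ p ∈ frontier Ω, ∃ V : Set ℂ, IsOpen V ∧ p ∈ V ∧
    ∃ (e : ℂ) (h : ℝ → ℝ), ‖e‖ = 1 ∧ CmHolderLocOn m α h univ ∧
      frontier Ω ∩ V = {z ∈ V | (e * (z - p)).im = h ((e * (z - p)).re)}

/-- A real hypersurface of class `C^{m+α}` in `ℝ^N`, described by local defining functions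
of class `C^{m+α}` with nonvanishing differential (equivalently, local graphs after an
orthogonal change of coordinates). -/
def IsHypersurfaceOfClass {N : ℕ} (m : ℕ) (α : ℝ)
    (M : Set (EuclideanSpace ℝ (Fin N))) : Prop :=
  ∀ p ∈ M, ∃ V : Set (EuclideanSpace ℝ (Fin N)), IsOpen V ∧ p ∈ V ∧
    ∃ r : EuclideanSpace ℝ (Fin N) → ℝ, CmHolderLocOn m α r V ∧
      (∀ x ∈ V, fderiv ℝ r x ≠ 0) ∧ M ∩ V = {x ∈ V | r x = 0}

/-- An almost complex structure of class `C^{k+α}` on the set `S ⊆ ℝ^N`. -/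
def IsACSOn {N : ℕ} (k : ℕ) (α : ℝ)
    (J : EuclideanSpace ℝ (Fin N) → (EuclideanSpace ℝ (Fin N) →L[ℝ] EuclideanSpace ℝ (Fin N)))
    (S : Set (EuclideanSpace ℝ (Fin N))) : Prop :=
  CmHolderLocOn k α J S ∧ ∀ p ∈ S, ∀ v, J p (J p v) = -v

/-- The operator `(I + T_Ω a ∂_z)` with parameter. -/
def opTa {E₂ : Type*} (Ω : Set ℂ) (a : ℂ → E₂ → ℂ) (f : ℂ → E₂ → ℂ) : ℂ → E₂ → ℂ :=
  fun z t => f z t + cauchyGreen Ω (fun ζ => a ζ t * wirtingerZ (fun w => f w t) ζ) z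

/-- The operator `(I + T_Ω a ∂_z)` without parameter. -/
def opTa1 (Ω : Set ℂ) (a : ℂ → ℂ) (f : ℂ → ℂ) : ℂ → ℂ :=
  fun z => f z + cauchyGreen Ω (fun ζ => a ζ * wirtingerZ f ζ) z

/-- The matrix operator `(I + T_Ω A ∂_z)` with parameter, acting componentwise. -/
def opTA {E₂ : Type*} {m : ℕ} (Ω : Set ℂ) (A : Fin m → Fin m → ℂ → E₂ → ℂ)
    (f : ℂ → E₂ → Fin m → ℂ) : ℂ → E₂ → Fin m → ℂ :=
  fun z t p => f z t p +
    cauchyGreen Ω (fun ζ => ∑ q, A p q ζ t * wirtingerZ (fun w => f w t q) ζ) z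

/-- The matrix operator `(I + T_Ω A ∂̄_z)` (where `∂̄_z f = conj (∂_z f)`) with parameter. -/
def opTAbar {E₂ : Type*} {m : ℕ} (Ω : Set ℂ) (A : Fin m → Fin m → ℂ → E₂ → ℂ)
    (f : ℂ → E₂ → Fin m → ℂ) : ℂ → E₂ → Fin m → ℂ :=
  fun z t p => f z t p +
    cauchyGreen Ω
      (fun ζ => ∑ q, A p q ζ t * (starRingEnd ℂ) (wirtingerZ (fun w => f w t q) ζ)) z

/-- `L` is a bounded bijection of `Ĉ^{k+α,j}(S,P)` (valued in `F`) with bounded inverse. -/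
def IsBoundedBijWith {E₂ F : Type*} [NormedAddCommGroup E₂] [NormedSpace ℝ E₂]
    [NormedAddCommGroup F] [NormedSpace ℝ F]
    (k : ℕ) (α : ℝ) (j : ℕ) (L : (ℂ → E₂ → F) → (ℂ → E₂ → F)) (S : Set ℂ) (P : Set E₂) :
    Prop :=
  (∃ C > 0,
    (∀ f M, 0 ≤ M → MixedHolderWith k α j M f S P → MixedHolderWith k α j (C * M) (L f) S P) ∧
    (∀ f M, 0 ≤ M → MixedHolder k α j f S P → MixedHolderWith k α j M (L f) S P →
      MixedHolderWith k α j (C * M) f S P)) ∧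
  (∀ f g, MixedHolder k α j f S P → MixedHolder k α j g S P →
    (∀ z ∈ S, ∀ t ∈ P, L f z t = L g z t) → ∀ z ∈ S, ∀ t ∈ P, f z t = g z t) ∧
  (∀ g, MixedHolder k α j g S P → ∃ f, MixedHolder k α j f S P ∧
    ∀ z ∈ S, ∀ t ∈ P, L f z t = g z t)

/-- The upper half-disc `𝔻⁺`. -/
def Dplus : Set ℂ := {z | ‖z‖ < 1 ∧ 0 < z.im}

/-- The upper half-disc `𝔻_r⁺` of radius `r`. -/
def DplusR (r : ℝ) : Set ℂ := {z | ‖z‖ < r ∧ 0 < z.im}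

/-- The Cauchy-type integral `C₀f(z) = (1/2πi) ∫_{-1}^1 f(s)/(τ(s) - τ(z)) ds`. -/
def cauchyTypeInt (τ : ℂ → ℂ) (f : ℝ → ℂ) (z : ℂ) : ℂ :=
  (2 * Real.pi * Complex.I)⁻¹ * ∫ s in (-1:ℝ)..1, f s / (τ (s : ℂ) - τ z)

/-- `f` has non-tangential limit `L` at the boundary point `x` of `Ω`. -/
def NontangentialLimit (f : ℂ → ℂ) (Ω : Set ℂ) (x L : ℂ) : Prop :=
  ∀ M : ℝ, 1 < M →
    Tendsto f (𝓝[{z ∈ Ω | dist z x < M * Metric.infDist z (frontier Ω)}] x) (𝓝 L)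

/-- The list of `y`-directions `∂_y^I` given by a multi-index `I`. -/
def yDirList (n m' : ℕ) (I : Fin m' → ℕ) :
    List (EuclideanSpace ℝ (Fin n) × EuclideanSpace ℝ (Fin m')) :=
  (List.finRange m').flatMap fun l => List.replicate (I l) (0, EuclideanSpace.single l 1)

end

/-!
Suppose `ℓ (J₁ v) * ℓ (J₂ v) ≤ 0` on `M = ker ℓ`. Neither `ℓ ∘ J₁` nor `ℓ ∘ J₂` vanishes on `M`,
since `ℓ ∘ J = a ℓ` would force `a² = -1`. Two linear forms on `M` whose product is nowhere
positive are proportional with a negative ratio: at a zero `u` of the first, the product along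
`t ↦ u + t w` is maximal at `t = 0`, so its derivative `ℓ (J₁ w) * ℓ (J₂ u)` vanishes. Hence
`ℓ ∘ J₂ = c (ℓ ∘ J₁) + μ ℓ` with `c < 0`. As `J(M) = ker (ℓ ∘ J)`, this gives
`M ∩ J₁(M) = M ∩ J₂(M)`; and `A = J₂ - J₁` satisfies `c (ℓ ∘ A²) = ((c - 1)² + μ²) ℓ`, so
`‖A‖² ≥ ((c - 1)² + μ²) / |c| ≥ 4`.
-/

namespace LinearMap

section Field

variable {𝕜 E : Type*} [Field 𝕜] [AddCommGroup E] [Module 𝕜 E]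

theorem exists_eq_smul_of_ker_le {ℓ f : E →ₗ[𝕜] 𝕜} (h : ker ℓ ≤ ker f) : ∃ a : 𝕜, f = a • ℓ := by
  have hf := mem_span_of_iInf_ker_le_ker (L := fun _ : Unit ↦ ℓ) (K := f) (by rwa [iInf_const])
  rw [range_const] at hf
  obtain ⟨a, rfl⟩ := Submodule.mem_span_singleton.1 hf
  exact ⟨a, rfl⟩

theorem exists_eq_smul_add_smul_of_ker_inf_ker_le {ℓ f g : E →ₗ[𝕜] 𝕜}
    (h : ker ℓ ⊓ ker f ≤ ker g) : ∃ a b : 𝕜, g = a • f + b • ℓ := by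
  have hg := mem_span_of_iInf_ker_le_ker (L := fun b ↦ bif b then f else ℓ) (K := g)
    (by rwa [iInf_bool_eq, inf_comm])
  obtain ⟨c, hc⟩ := (Submodule.mem_span_range_iff_exists_fun 𝕜).1 hg
  exact ⟨c true, c false, by rw [← hc, Fintype.sum_bool]; rfl⟩

end Field

variable {E : Type*} [AddCommGroup E] [Module ℝ E]

theorem exists_apply_eq_zero_and_apply_apply_ne_zero {ℓ : E →ₗ[ℝ] ℝ} (hℓ : ℓ ≠ 0)
    {J : E →ₗ[ℝ] E} (hJ : ∀ v, J (J v) = -v) : ∃ w, ℓ w = 0 ∧ ℓ (J w) ≠ 0 := by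
  by_contra! hk
  obtain ⟨a, ha⟩ := exists_eq_smul_of_ker_le (f := ℓ ∘ₗ J) fun v hv ↦ hk v hv
  obtain ⟨x, hx⟩ := DFunLike.ne_iff.1 hℓ
  have hJx (y : E) : ℓ (J y) = a * ℓ y := LinearMap.congr_fun ha y
  have : (a ^ 2 + 1) * ℓ x = 0 := by
    have := hJx (J x)
    rw [hJ, hJx, map_neg] at this
    linear_combination -this
  exact hx ((mul_eq_zero.1 this).resolve_left (by positivity))

theorem apply_eq_zero_of_forall_mul_nonpos {f g : E →ₗ[ℝ] ℝ} {u w : E} (hu : f u = 0)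
    (hw : f w ≠ 0) (h : ∀ t : ℝ, f (u + t • w) * g (u + t • w) ≤ 0) : g u = 0 := by
  have hmax : IsLocalMax (fun t : ℝ ↦ f (u + t • w) * g (u + t • w)) 0 :=
    IsMaxOn.isLocalMax (fun t _ ↦ by simpa [hu] using h t) Filter.univ_mem
  have hderiv : HasDerivAt (fun t : ℝ ↦ f (u + t • w) * g (u + t • w)) (f w * g u) 0 := by
    simp only [map_add, map_smul, smul_eq_mul, hu, zero_add]
    simpa using ((hasDerivAt_id' 0).mul_const (f w)).fun_mul
      (((hasDerivAt_id' 0).mul_const (g w)).const_add (g u))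
  exact (mul_eq_zero.1 (hmax.hasDerivAt_eq_zero hderiv)).resolve_left hw

theorem exists_neg_apply_eq_mul_add_mul_of_mul_nonpos {ℓ f g : E →ₗ[ℝ] ℝ}
    (hf : ∃ w, ℓ w = 0 ∧ f w ≠ 0) (hg : ∃ w, ℓ w = 0 ∧ g w ≠ 0)
    (h : ∀ v, ℓ v = 0 → f v * g v ≤ 0) :
    ∃ c : ℝ, c < 0 ∧ ∃ μ : ℝ, ∀ v, g v = c * f v + μ * ℓ v := by
  obtain ⟨w, hℓw, hfw⟩ := hf
  have hker : ker ℓ ⊓ ker f ≤ ker g := fun v ⟨hℓv, hfv⟩ ↦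
    apply_eq_zero_of_forall_mul_nonpos hfv hfw fun t ↦ h _ (by simp_all)
  obtain ⟨c, μ, rfl⟩ := exists_eq_smul_add_smul_of_ker_inf_ker_le hker
  refine ⟨c, lt_of_le_of_ne ?_ ?_, μ, fun v ↦ rfl⟩
  · have := h w hℓw
    simp only [add_apply, smul_apply, hℓw, smul_eq_mul, mul_zero, add_zero] at this
    nlinarith [mul_self_pos.2 hfw]
  · rintro rfl
    obtain ⟨w', hℓw', hgw'⟩ := hg
    simp [hℓw'] at hgw'

theorem mul_apply_sub_apply_sub_eq {ℓ : E →ₗ[ℝ] ℝ} {J₁ J₂ : E →ₗ[ℝ] E}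
    (hJ₁ : ∀ v, J₁ (J₁ v) = -v) (hJ₂ : ∀ v, J₂ (J₂ v) = -v) {c μ : ℝ}
    (h : ∀ v, ℓ (J₂ v) = c * ℓ (J₁ v) + μ * ℓ v) (x : E) :
    c * ℓ ((J₂ - J₁) ((J₂ - J₁) x)) = ((c - 1) ^ 2 + μ ^ 2) * ℓ x := by
  have h₁ := h (J₁ x)
  have h₂ := h (J₂ x)
  simp only [hJ₁, hJ₂, map_neg] at h₁ h₂
  simp only [sub_apply, map_sub, hJ₁, hJ₂, map_neg]
  linear_combination -c * h₁ + h₂ + μ * h x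

end LinearMap

theorem image_setOf_apply_eq_zero {E R F G : Type*} [AddCommGroup E] [AddCommGroup R]
    [FunLike F E E] [AddMonoidHomClass F E E] [FunLike G E R] [AddMonoidHomClass G E R]
    {J : F} (hJ : ∀ v, J (J v) = -v) (ℓ : G) :
    J '' {x | ℓ x = 0} = {x | ℓ (J x) = 0} := by
  ext x
  refine ⟨?_, fun hx ↦ ⟨-J x, by simpa using hx, by rw [map_neg, hJ, neg_neg]⟩⟩
  rintro ⟨y, hy, rfl⟩
  simpa [hJ] using hy

theorem ContinuousLinearMap.abs_le_abs_mul_opNorm_sq {E : Type*} [NormedAddCommGroup E]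
    [NormedSpace ℝ E] {ℓ : E →L[ℝ] ℝ} (hℓ : ℓ ≠ 0) {A : E →L[ℝ] E} {a b : ℝ}
    (h : ∀ x, a * ℓ (A (A x)) = b * ℓ x) : |b| ≤ |a| * ‖A‖ ^ 2 := by
  have hcomp : b • ℓ = a • ℓ.comp (A.comp A) := by ext x; simp [h]
  have hnorm := congr_arg norm hcomp
  rw [norm_smul, norm_smul, Real.norm_eq_abs, Real.norm_eq_abs] at hnorm
  have hle : ‖ℓ.comp (A.comp A)‖ ≤ ‖ℓ‖ * ‖A‖ ^ 2 := by
    rw [sq]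
    exact (opNorm_comp_le _ _).trans (by gcongr; exact opNorm_comp_le _ _)
  have hℓpos : 0 < ‖ℓ‖ := norm_pos_iff.2 hℓ
  nlinarith [abs_nonneg a]

theorem linear_structures_same_side_general
    (n : ℕ)
    (J₁ J₂ : EuclideanSpace ℝ (Fin (2 * n)) →L[ℝ] EuclideanSpace ℝ (Fin (2 * n)))
    (hJ₁ : ∀ v, J₁ (J₁ v) = -v) (hJ₂ : ∀ v, J₂ (J₂ v) = -v)
    (ℓ : EuclideanSpace ℝ (Fin (2 * n)) →L[ℝ] ℝ) (hℓ : ℓ ≠ 0)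
    (h : ({x | ℓ x = 0} ∩ (⇑J₁ '' {x | ℓ x = 0}) ≠ {x | ℓ x = 0} ∩ (⇑J₂ '' {x | ℓ x = 0}))
      ∨ ‖J₂ - J₁‖ < 2) :
    ∃ v, ℓ v = 0 ∧ 0 < ℓ (J₁ v) * ℓ (J₂ v) := by
  by_contra! hcon
  have hℓ' := ContinuousLinearMap.coe_injective.ne hℓ
  obtain ⟨c, hc, μ, hJ⟩ : ∃ c : ℝ, c < 0 ∧ ∃ μ : ℝ, ∀ v, ℓ (J₂ v) = c * ℓ (J₁ v) + μ * ℓ v :=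
    LinearMap.exists_neg_apply_eq_mul_add_mul_of_mul_nonpos (ℓ := ℓ.toLinearMap)
      (f := ℓ.toLinearMap ∘ₗ J₁.toLinearMap) (g := ℓ.toLinearMap ∘ₗ J₂.toLinearMap)
      (LinearMap.exists_apply_eq_zero_and_apply_apply_ne_zero hℓ' (J := J₁) hJ₁)
      (LinearMap.exists_apply_eq_zero_and_apply_apply_ne_zero hℓ' (J := J₂) hJ₂) hcon
  rcases h with hne | hnorm
  · apply hne
    rw [image_setOf_apply_eq_zero hJ₁, image_setOf_apply_eq_zero hJ₂]
    ext x
    simp +contextual [hJ, hc.ne]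
  · have hbound := ContinuousLinearMap.abs_le_abs_mul_opNorm_sq hℓ (A := J₂ - J₁) fun x ↦ by
      simpa using LinearMap.mul_apply_sub_apply_sub_eq (J₁ := J₁) (J₂ := J₂) hJ₁ hJ₂ hJ x
    rw [abs_of_neg hc, abs_of_nonneg (by positivity)] at hbound
    have hsq : ‖J₂ - J₁‖ ^ 2 < 2 ^ 2 := pow_lt_pow_left₀ hnorm (norm_nonneg _) two_ne_zero
    nlinarith [mul_lt_mul_of_pos_left hsq (neg_pos.2 hc), sq_nonneg (c + 1), sq_nonneg μ]

/-- Lemma 3.1: given two linear complex structures `J¹, J²` on `ℝ^{2n}` and a hyperplane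
`M = ker ℓ`, if `M ∩ J¹(M) ≠ M ∩ J²(M)` or `‖J² - J¹‖ < 2`, then some `v ∈ M` has
`J¹v` and `J²v` strictly on the same side of `M`. -/
theorem linear_structures_same_side
    (n : ℕ) (hn : 0 < n)
    (J₁ J₂ : EuclideanSpace ℝ (Fin (2 * n)) →L[ℝ] EuclideanSpace ℝ (Fin (2 * n)))
    (hJ₁ : ∀ v, J₁ (J₁ v) = -v) (hJ₂ : ∀ v, J₂ (J₂ v) = -v)
    (ℓ : EuclideanSpace ℝ (Fin (2 * n)) →L[ℝ] ℝ) (hℓ : ℓ ≠ 0)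
    (h : ({x | ℓ x = 0} ∩ (⇑J₁ '' {x | ℓ x = 0}) ≠ {x | ℓ x = 0} ∩ (⇑J₂ '' {x | ℓ x = 0}))
      ∨ ‖J₂ - J₁‖ < 2) :
    ∃ v, ℓ v = 0 ∧ 0 < ℓ (J₁ v) * ℓ (J₂ v) :=
  linear_structures_same_side_general n J₁ J₂ hJ₁ hJ₂ ℓ hℓ h
end

section
/- Let k and n be positive integers and let ε > 0. Then there exist a positive integer N depending only on k and n, vectors v₁, …, v_N ∈ ℝ^n of the form v_j = (1, v_j′) with v_j′ ∈ ℝ^{n−1} and |v_j′| < ε, and real constants c_{α,j}, such that for every multi-index α with |α| = k, the identity ξ^α = Σ_{j=1}^N c_{α,j} (v_j · ξ)^k holds for all ξ ∈ ℝ^n. (Equivalently, every k-th order partial differential operator ∂^α with constant coefficients is a linear combination of the powers (v_j · ∂)^k.) -/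
open Set MeasureTheory Filter
open scoped Topology

/-!
Expanding `(v · ξ)^k` by the multinomial theorem, a weighted sum of these powers over a grid of
directions `v` is a combination of monomials `ξ^b` whose coefficients factor over the coordinates
as one-variable moments `∑ₜ wᵢ(t) xᵢ(t)^{bᵢ}` of the weights against the grid nodes. Taking the
first coordinate of `v` equal to `1` and the others on `k + 1` distinct small nodes, the rows of
the inverse Vandermonde matrix give weights whose moments single out one exponent per coordinate;
since `|b| = |a| = k`, fixing `bᵢ = aᵢ` off the first coordinate fixes `b = a`, so the weighted
sum is `multinomial a · ξ^a`.
-/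

open Finset

lemma sum_prod_mul_dot_pow_eq_sum_piAntidiag {ι κ R : Type*} [Fintype ι] [DecidableEq ι]
    [Fintype κ] [CommSemiring R] (w x : ι → κ → R) (ξ : ι → R) (k : ℕ) :
    ∑ u : ι → κ, (∏ i, w i (u i)) * (∑ i, x i (u i) * ξ i) ^ k =
      ∑ b ∈ piAntidiag univ k,
        Nat.multinomial univ b * (∏ i, ξ i ^ b i) * ∏ i, ∑ t, w i t * x i t ^ b i := by
  simp_rw [sum_pow_eq_sum_piAntidiag, mul_sum]
  rw [sum_comm]
  refine sum_congr rfl fun b _ => ?_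
  rw [prod_univ_sum, mul_sum]
  refine sum_congr rfl fun u _ => ?_
  simp_rw [mul_pow, prod_mul_distrib]
  ring

lemma sum_prod_mul_dot_pow_eq_multinomial_mul {ι κ R : Type*} [Fintype ι] [DecidableEq ι]
    [Fintype κ] [CommSemiring R] {w x : ι → κ → R} {k : ℕ} {a : ι → ℕ}
    (ha : a ∈ piAntidiag univ k)
    (hdual : ∀ b ∈ piAntidiag univ k, ∏ i, ∑ t, w i t * x i t ^ b i = if b = a then 1 else 0)
    (ξ : ι → R) :
    ∑ u : ι → κ, (∏ i, w i (u i)) * (∑ i, x i (u i) * ξ i) ^ k =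
      Nat.multinomial univ a * ∏ i, ξ i ^ a i := by
  rw [sum_prod_mul_dot_pow_eq_sum_piAntidiag,
    sum_congr rfl fun b hb => by rw [hdual b hb, mul_ite, mul_one, mul_zero],
    sum_ite_eq' _ _ _, if_pos ha]

lemma Matrix.exists_sum_mul_pow_eq_ite_of_injective {K : Type*} [Field K] {k : ℕ}
    {x : Fin (k + 1) → K} (hx : Function.Injective x) :
    ∃ E : ℕ → Fin (k + 1) → K, ∀ m ≤ k, ∀ m' ≤ k,
      ∑ t, E m t * x t ^ m' = if m' = m then 1 else 0 := by
  have hV : IsUnit (vandermonde x).det := isUnit_iff_ne_zero.2 (det_vandermonde_ne_zero_iff.2 hx)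
  refine ⟨fun m => (vandermonde x)⁻¹ (Fin.ofNat (k + 1) m), fun m hm m' hm' => ?_⟩
  have h := congr_fun₂ (nonsing_inv_mul _ hV) (Fin.ofNat (k + 1) m) ⟨m', Nat.lt_succ_of_le hm'⟩
  simp only [mul_apply, vandermonde_apply, one_apply, Fin.ext_iff, Fin.val_ofNat,
    Nat.mod_eq_of_lt (Nat.lt_succ_of_le hm)] at h
  simp_rw [h, eq_comm]

lemma eq_of_sum_eq_of_forall_ne {ι M : Type*} [Fintype ι] [DecidableEq ι]
    [AddCancelCommMonoid M] {a b : ι → M} (i₀ : ι) (hsum : ∑ i, b i = ∑ i, a i)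
    (h : ∀ i ≠ i₀, b i = a i) : b = a := by
  funext i
  rcases eq_or_ne i i₀ with rfl | hi
  · rw [← add_sum_erase _ _ (mem_univ i), ← add_sum_erase _ _ (mem_univ i),
      sum_congr rfl fun j hj => h j (ne_of_mem_erase hj)] at hsum
    exact add_right_cancel hsum
  · exact h i hi

def gridNode {ι κ K : Type*} [DecidableEq ι] [One K] (i₀ : ι) (x : κ → K) (i : ι) (t : κ) : K :=
  if i = i₀ then 1 else x t

lemma exists_prod_sum_mul_gridNode_pow_eq_ite {ι K : Type*} [Fintype ι] [DecidableEq ι] [Field K]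
    {k : ℕ} (i₀ : ι) {x : Fin (k + 1) → K} (hx : Function.Injective x) :
    ∃ w : (ι → ℕ) → ι → Fin (k + 1) → K, ∀ a ∈ piAntidiag univ k, ∀ b ∈ piAntidiag univ k,
      ∏ i, ∑ t, w a i t * gridNode i₀ x i t ^ b i = if b = a then 1 else 0 := by
  obtain ⟨E, hE⟩ := Matrix.exists_sum_mul_pow_eq_ite_of_injective hx
  refine ⟨fun a i t => if i = i₀ then (if t = 0 then 1 else 0) else E (a i) t,
    fun a ha b hb => ?_⟩
  rw [mem_piAntidiag] at ha hb
  have hle {c : ι → ℕ} (hc : ∑ i, c i = k) (i : ι) : c i ≤ k :=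
    hc ▸ single_le_sum (fun j _ => Nat.zero_le (c j)) (mem_univ i)
  have hmoment (i : ι) : ∑ t, (if i = i₀ then (if t = 0 then 1 else 0) else E (a i) t) *
      gridNode i₀ x i t ^ b i = if i = i₀ ∨ b i = a i then 1 else 0 := by
    by_cases hi : i = i₀
    · simp [gridNode, hi]
    · simp only [gridNode, hi, if_false, false_or]
      exact hE _ (hle ha.1 i) _ (hle hb.1 i)
  simp only [hmoment, prod_boole, Finset.mem_univ, forall_const]
  congr 1
  exact propext ⟨fun h => eq_of_sum_eq_of_forall_ne i₀ (hb.1.trans ha.1.symm)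
    fun i hi => (h i).resolve_left hi, fun h i => Or.inr (congr_fun h i)⟩

lemma sqrt_sum_sq_gridNode_lt {ι : Type*} [Fintype ι] [DecidableEq ι] {k : ℕ} (i₀ : ι)
    {δ ε : ℝ} (hδ : 0 ≤ δ) (hε : δ * k * Fintype.card ι < ε) (u : ι → Fin (k + 1)) :
    √(∑ i ∈ univ.erase i₀, gridNode i₀ (fun t : Fin (k + 1) => δ * t) i (u i) ^ 2) < ε := by
  have hε₀ : 0 < ε := lt_of_le_of_lt (by positivity) hε
  rw [Real.sqrt_lt' hε₀]
  have hcoord (i : ι) (hi : i ∈ univ.erase i₀) :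
      gridNode i₀ (fun t : Fin (k + 1) => δ * t) i (u i) ^ 2 ≤ (δ * k) ^ 2 := by
    rw [gridNode, if_neg (ne_of_mem_erase hi)]
    have : ((u i : ℕ) : ℝ) ≤ k := by exact_mod_cast Fin.is_le (u i)
    gcongr
  have hcard : (Fintype.card ι : ℝ) ≤ (Fintype.card ι : ℝ) ^ 2 := by
    exact_mod_cast Nat.le_self_pow two_ne_zero _
  calc ∑ i ∈ univ.erase i₀, gridNode i₀ (fun t : Fin (k + 1) => δ * t) i (u i) ^ 2
      ≤ ∑ _i ∈ univ.erase i₀, (δ * k) ^ 2 := sum_le_sum hcoord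
    _ ≤ ∑ _i : ι, (δ * k) ^ 2 := sum_le_sum_of_subset_of_nonneg (erase_subset _ _)
          fun _ _ _ => sq_nonneg _
    _ = Fintype.card ι * (δ * k) ^ 2 := by rw [sum_const, card_univ, nsmul_eq_mul]
    _ ≤ (δ * k * Fintype.card ι) ^ 2 := by
          rw [mul_pow _ (Fintype.card ι : ℝ), mul_comm]
          exact mul_le_mul_of_nonneg_left hcard (sq_nonneg _)
    _ < ε ^ 2 := pow_lt_pow_left₀ hε (by positivity) two_ne_zero

theorem monomials_from_powers_of_directions_general
    (k n : ℕ) (hn : 0 < n) :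
    ∃ N : ℕ, ∀ ε : ℝ, 0 < ε →
      ∃ (v : Fin N → (Fin n → ℝ)) (c : (Fin n → ℕ) → Fin N → ℝ),
        (∀ j : Fin N, v j ⟨0, hn⟩ = 1 ∧
          Real.sqrt (∑ i ∈ Finset.univ.erase (⟨0, hn⟩ : Fin n), v j i ^ 2) < ε) ∧
        ∀ a : Fin n → ℕ, (∑ i, a i) = k → ∀ ξ : Fin n → ℝ,
          (∏ i, ξ i ^ a i) = ∑ j, c a j * (∑ i, v j i * ξ i) ^ k := by
  let e := (Fintype.equivFin (Fin n → Fin (k + 1))).symm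
  refine ⟨Fintype.card (Fin n → Fin (k + 1)), fun ε hε => ?_⟩
  set δ : ℝ := ε / (k * n + 1)
  have hδ : 0 < δ := by positivity
  have hδε : δ * k * n < ε := by
    calc δ * k * n < δ * (k * n + 1) := by nlinarith
      _ = ε := div_mul_cancel₀ _ (by positivity)
  let x : Fin (k + 1) → ℝ := fun t => δ * t
  have hx : Function.Injective x :=
    (mul_right_injective₀ hδ.ne').comp (Nat.cast_injective.comp Fin.val_injective)
  obtain ⟨w, hw⟩ := exists_prod_sum_mul_gridNode_pow_eq_ite (⟨0, hn⟩ : Fin n) hx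
  refine ⟨fun j i => gridNode ⟨0, hn⟩ x i (e j i),
    fun a j => (∏ i, w a i (e j i)) / Nat.multinomial univ a,
    fun j => ⟨if_pos rfl, sqrt_sum_sq_gridNode_lt _ hδ.le (by simpa using hδε) (e j)⟩,
    fun a ha ξ => ?_⟩
  have ha' : a ∈ piAntidiag univ k := mem_piAntidiag.2 ⟨ha, fun i _ => Finset.mem_univ i⟩
  have hM : (Nat.multinomial univ a : ℝ) ≠ 0 := by exact_mod_cast (Nat.multinomial_pos _ _).ne'
  rw [Fintype.sum_equiv e _ (fun u => (∏ i, w a i (u i)) / Nat.multinomial univ a *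
      (∑ i, gridNode ⟨0, hn⟩ x i (u i) * ξ i) ^ k) fun _ => rfl]
  simp_rw [div_mul_eq_mul_div, ← sum_div]
  rw [sum_prod_mul_dot_pow_eq_multinomial_mul ha' (hw a ha') ξ, mul_div_cancel_left₀ _ hM]

/-- Lemma 3.5 (i): every monomial `ξ^a` of degree `k` is a fixed linear combination of
`k`-th powers `(v_j · ξ)^k` with `v_j = (1, v_j')` and `|v_j'| < ε`; the number `N` of
vectors depends only on `k` and `n`. -/
theorem monomials_from_powers_of_directions
    (k n : ℕ) (hk : 0 < k) (hn : 0 < n) :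
    ∃ N : ℕ, ∀ ε : ℝ, 0 < ε →
      ∃ (v : Fin N → (Fin n → ℝ)) (c : (Fin n → ℕ) → Fin N → ℝ),
        (∀ j : Fin N, v j ⟨0, hn⟩ = 1 ∧
          Real.sqrt (∑ i ∈ Finset.univ.erase (⟨0, hn⟩ : Fin n), v j i ^ 2) < ε) ∧
        ∀ a : Fin n → ℕ, (∑ i, a i) = k → ∀ ξ : Fin n → ℝ,
          (∏ i, ξ i ^ a i) = ∑ j, c a j * (∑ i, v j i * ξ i) ^ k :=
  monomials_from_powers_of_directions_general k n hn
end

section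
/- Let k and n be positive integers. Suppose vectors v₁, …, v_N ∈ ℝ^n and real constants c_{α,j} satisfy ξ^α = Σ_{j=1}^N c_{α,j} (v_j · ξ)^k for every multi-index α with |α| = k and all ξ ∈ ℝ^n. Then there exist δ > 0 and, for each multi-index α with |α| = k and each j, a function Q_{α,j} defined and continuous on {u = (u₁,…,u_N) ∈ (ℝ^n)^N : max_j |u_j − v_j| < δ} with Q_{α,j}(v₁,…,v_N) = c_{α,j}, such that whenever max_j |u_j − v_j| < δ, the identity ξ^α = Σ_{j=1}^N Q_{α,j}(u)·(u_j · ξ)^k holds for all ξ ∈ ℝ^n and all |α| = k. -/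
open Set MeasureTheory Filter
open scoped Topology

/-! Expanding `(u_j · ξ)^k` in the monomials of degree `k` gives a coefficient matrix `M(u)`
depending continuously on `u`, and since monomials are linearly independent the hypothesis says
that `c` is a left inverse of `M(v)`. For `u` near `v` the matrix `c M(u)` stays invertible, and
`Q(u) = (c M(u))⁻¹ c` is a left inverse of `M(u)`, continuous in `u` and equal to `c` at `v`. -/

section LeftInverse

variable {X ι κ 𝕜 : Type*} [TopologicalSpace X] [Fintype ι] [DecidableEq ι] [Fintype κ]
  [NormedField 𝕜]

theorem exists_continuousOn_leftInverse_of_mul_eq_one {M : X → Matrix κ ι 𝕜}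
    (hM : Continuous M) {C : Matrix ι κ 𝕜} {x₀ : X} (hC : C * M x₀ = 1) :
    ∃ U : Set X, IsOpen U ∧ x₀ ∈ U ∧ ∃ Q : X → Matrix ι κ 𝕜,
      ContinuousOn Q U ∧ Q x₀ = C ∧ ∀ x ∈ U, Q x * M x = 1 := by
  have hCM : Continuous fun x => C * M x := continuous_const.matrix_mul hM
  refine ⟨{x | (C * M x).det ≠ 0}, isOpen_ne_fun hCM.matrix_det continuous_const,
    by simp [hC], fun x => (C * M x)⁻¹ * C, ?_, by simp [hC], fun x hx => ?_⟩
  · refine fun x hx => ContinuousAt.continuousWithinAt ?_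
    have hinv : ContinuousAt Inv.inv (C * M x) :=
      continuousAt_matrix_inv _ (by simpa only [Ring.inverse_eq_inv'] using continuousAt_inv₀ hx)
    exact (continuous_id.matrix_mul continuous_const).continuousAt.comp
      (g := fun A => A * C) (hinv.comp (f := fun x => C * M x) hCM.continuousAt)
  · rw [Matrix.mul_assoc, Matrix.nonsing_inv_mul _ (isUnit_iff_ne_zero.mpr hx)]

end LeftInverse

section Monomials

open Matrix

variable {σ R : Type*} [Fintype σ]

def monomialVec [CommMonoid R] (s : Finset (σ → ℕ)) (ξ : σ → R) : s → R :=
  fun b => ∏ i, ξ i ^ b.1 i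

theorem eq_zero_of_forall_dotProduct_monomialVec_eq_zero
    [CommRing R] [IsDomain R] [Infinite R] {s : Finset (σ → ℕ)} {r : s → R}
    (hr : ∀ ξ, r ⬝ᵥ monomialVec s ξ = 0) : r = 0 := by
  classical
  let d : s → σ →₀ ℕ := fun b => Finsupp.equivFunOnFinite.symm b.1
  have hd : Function.Injective d := fun a b hab =>
    Subtype.ext (Finsupp.equivFunOnFinite.symm.injective hab)
  let q : MvPolynomial σ R := ∑ b, MvPolynomial.monomial (d b) (r b)
  have hq : q = 0 := MvPolynomial.funext fun ξ => by
    simp only [q, map_sum, MvPolynomial.eval_monomial, map_zero]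
    rw [← hr ξ]
    refine Finset.sum_congr rfl fun b _ => ?_
    rw [Finsupp.prod_fintype _ _ fun i => pow_zero _]
    rfl
  funext b
  have hb := congrArg (MvPolynomial.coeff (d b)) hq
  simpa [q, MvPolynomial.coeff_sum, MvPolynomial.coeff_monomial, hd.eq_iff] using hb

theorem Matrix.eq_of_forall_mulVec_monomialVec_eq [CommRing R] [IsDomain R] [Infinite R]
    {ι : Type*} {s : Finset (σ → ℕ)} {A B : Matrix ι s R}
    (h : ∀ ξ, A *ᵥ monomialVec s ξ = B *ᵥ monomialVec s ξ) : A = B := by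
  ext a b
  have hrow : A a - B a = 0 := eq_zero_of_forall_dotProduct_monomialVec_eq_zero fun ξ => by
    rw [sub_dotProduct]
    exact sub_eq_zero.mpr (congrFun (h ξ) a)
  exact sub_eq_zero.mp (congrFun hrow b)

variable [DecidableEq σ] {κ : Type*}

def powCoeffMatrix [CommSemiring R] (k : ℕ) (u : κ → σ → R) :
    Matrix κ (Finset.piAntidiag (Finset.univ : Finset σ) k) R :=
  fun j b => Nat.multinomial Finset.univ b.1 * ∏ i, u j i ^ b.1 i

theorem powCoeffMatrix_mulVec_monomialVec [CommSemiring R] (k : ℕ) (u : κ → σ → R)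
    (ξ : σ → R) :
    powCoeffMatrix k u *ᵥ monomialVec _ ξ = fun j => (∑ i, u j i * ξ i) ^ k := by
  funext j
  rw [Finset.sum_pow_eq_sum_piAntidiag, ← Finset.sum_coe_sort]
  refine Finset.sum_congr rfl fun b _ => ?_
  simp only [powCoeffMatrix, monomialVec, mul_pow, Finset.prod_mul_distrib, mul_assoc]

theorem continuous_powCoeffMatrix [CommSemiring R] [TopologicalSpace R] [IsTopologicalSemiring R]
    (k : ℕ) : Continuous (powCoeffMatrix (R := R) (κ := κ) (σ := σ) k) := by
  unfold powCoeffMatrix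
  fun_prop

end Monomials

theorem dist_le_sqrt_sum_sq {σ : Type*} [Fintype σ] (x y : σ → ℝ) :
    dist x y ≤ √(∑ i, (x i - y i) ^ 2) :=
  (dist_pi_le_iff (Real.sqrt_nonneg _)).mpr fun i => by
    rw [Real.dist_eq]
    exact Real.abs_le_sqrt (Finset.single_le_sum (fun i _ => sq_nonneg (x i - y i))
      (Finset.mem_univ i))

theorem monomials_from_powers_perturbation_general
    (k n N : ℕ)
    (v : Fin N → (Fin n → ℝ)) (c : (Fin n → ℕ) → Fin N → ℝ)
    (h : ∀ a : Fin n → ℕ, (∑ i, a i) = k → ∀ ξ : Fin n → ℝ,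
      (∏ i, ξ i ^ a i) = ∑ j, c a j * (∑ i, v j i * ξ i) ^ k) :
    ∃ δ > 0, ∃ Q : (Fin n → ℕ) → Fin N → ((Fin N → (Fin n → ℝ)) → ℝ),
      (∀ a : Fin n → ℕ, (∑ i, a i) = k → ∀ j : Fin N,
        ContinuousOn (Q a j)
          {u : Fin N → (Fin n → ℝ) |
            ∀ j', Real.sqrt (∑ i, (u j' i - v j' i) ^ 2) < δ} ∧
        Q a j v = c a j) ∧
      ∀ u : Fin N → (Fin n → ℝ),
        (∀ j', Real.sqrt (∑ i, (u j' i - v j' i) ^ 2) < δ) →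
        ∀ a : Fin n → ℕ, (∑ i, a i) = k → ∀ ξ : Fin n → ℝ,
          (∏ i, ξ i ^ a i) = ∑ j, Q a j u * (∑ i, u j i * ξ i) ^ k := by
  classical
  let s := Finset.piAntidiag (Finset.univ : Finset (Fin n)) k
  have mem_s {a : Fin n → ℕ} (ha : ∑ i, a i = k) : a ∈ s := by simp [s, ha]
  let C : Matrix s (Fin N) ℝ := fun a j => c a j
  have hCv : C * powCoeffMatrix k v = 1 := by
    refine Matrix.eq_of_forall_mulVec_monomialVec_eq fun ξ => ?_
    rw [← Matrix.mulVec_mulVec, powCoeffMatrix_mulVec_monomialVec, Matrix.one_mulVec]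
    exact funext fun a => (h a.1 (Finset.mem_piAntidiag.mp a.2).1 ξ).symm
  obtain ⟨U, hU, hvU, P, hPc, hPv, hPM⟩ :=
    exists_continuousOn_leftInverse_of_mul_eq_one (continuous_powCoeffMatrix k) hCv
  obtain ⟨δ, hδ, hball⟩ := Metric.isOpen_iff.mp hU v hvU
  have hsub :
      {u : Fin N → Fin n → ℝ | ∀ j', √(∑ i, (u j' i - v j' i) ^ 2) < δ} ⊆ U :=
    fun u hu => hball <| (dist_pi_lt_iff hδ).mpr fun j =>
      (dist_le_sqrt_sum_sq _ _).trans_lt (hu j)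
  refine ⟨δ, hδ, fun a j u => if ha : a ∈ s then P u ⟨a, ha⟩ j else 0,
    fun a ha j => ?_, fun u hu a ha ξ => ?_⟩
  · simp only [dif_pos (mem_s ha)]
    exact ⟨(continuous_apply_apply _ j).comp_continuousOn (hPc.mono hsub), by rw [hPv]⟩
  · simp only [dif_pos (mem_s ha)]
    calc ∏ i, ξ i ^ a i
        = (P u * powCoeffMatrix k u).mulVec (monomialVec s ξ) ⟨a, mem_s ha⟩ := by
          rw [hPM u (hsub hu), Matrix.one_mulVec]; rfl
      _ = ∑ j, P u ⟨a, mem_s ha⟩ j * (∑ i, u j i * ξ i) ^ k := by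
          rw [← Matrix.mulVec_mulVec, powCoeffMatrix_mulVec_monomialVec]; rfl

/-- Lemma 3.5 (ii): the representation of degree-`k` monomials by `k`-th powers of linear
forms is stable under perturbation of the directions, with coefficients `Q_{a,j}(u)`
depending continuously on `u` and equal to `c_{a,j}` at `u = v`. -/
theorem monomials_from_powers_perturbation
    (k n N : ℕ) (hk : 0 < k) (hn : 0 < n)
    (v : Fin N → (Fin n → ℝ)) (c : (Fin n → ℕ) → Fin N → ℝ)
    (h : ∀ a : Fin n → ℕ, (∑ i, a i) = k → ∀ ξ : Fin n → ℝ,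
      (∏ i, ξ i ^ a i) = ∑ j, c a j * (∑ i, v j i * ξ i) ^ k) :
    ∃ δ > 0, ∃ Q : (Fin n → ℕ) → Fin N → ((Fin N → (Fin n → ℝ)) → ℝ),
      (∀ a : Fin n → ℕ, (∑ i, a i) = k → ∀ j : Fin N,
        ContinuousOn (Q a j)
          {u : Fin N → (Fin n → ℝ) |
            ∀ j', Real.sqrt (∑ i, (u j' i - v j' i) ^ 2) < δ} ∧
        Q a j v = c a j) ∧
      ∀ u : Fin N → (Fin n → ℝ),
        (∀ j', Real.sqrt (∑ i, (u j' i - v j' i) ^ 2) < δ) →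
        ∀ a : Fin n → ℕ, (∑ i, a i) = k → ∀ ξ : Fin n → ℝ,
          (∏ i, ξ i ^ a i) = ∑ j, Q a j u * (∑ i, u j i * ξ i) ^ k :=
  monomials_from_powers_perturbation_general k n N v c h
end
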